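/- Let w₀ : ℝ → ℝ be smooth and strictly increasing with w₀' > 0, and let w(t,x) = w₀(x₀(t,x)) where x₀(t,x) is defined by x = x₀ + w₀(x₀) t. Then ∂_x w(t,x) = w₀'(x₀)/(1 + w₀'(x₀) t) for all t ≥ 0, x ∈ ℝ; in particular 0 < ∂_x w(t,x) ≤ 1/t for all t > 0. -/

import Mathlib

/-- For the Burgers solution constructed by characteristics from a smooth
strictly increasing datum, ∂ₓw(t,x) = w₀'(x₀)/(1 + w₀'(x₀) t), and in
particular 0 < ∂ₓw(t,x) ≤ 1/t for t > 0. -/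
theorem burgers_characteristics_x_derivative
    (w₀ : ℝ → ℝ) (hsmooth : ContDiff ℝ (⊤ : ℕ∞) w₀)
    (hmono : StrictMono w₀)
    (hderiv : ∀ x : ℝ, 0 < deriv w₀ x)
    (x0 : ℝ → ℝ → ℝ)
    (hx0 : ∀ t x : ℝ, 0 ≤ t → x = x0 t x + w₀ (x0 t x) * t) :
    (∀ t x : ℝ, 0 ≤ t →
      HasDerivAt (fun y => w₀ (x0 t y))
        (deriv w₀ (x0 t x) / (1 + deriv w₀ (x0 t x) * t)) x) ∧
    (∀ t x : ℝ, 0 < t →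
      0 < deriv w₀ (x0 t x) / (1 + deriv w₀ (x0 t x) * t) ∧
      deriv w₀ (x0 t x) / (1 + deriv w₀ (x0 t x) * t) ≤ 1 / t) := by
  constructor
  · intro t x ht
    set F : ℝ → ℝ := fun y => y + w₀ y * t with hF
    have hFmono : StrictMono F := by
      intro a b hab
      have := hmono.le_iff_le.2 hab.le
      have : w₀ a * t ≤ w₀ b * t := mul_le_mul_of_nonneg_right this ht
      simpa [hF] using add_lt_add_of_lt_of_le hab this
    have hFx0 : ∀ y, F (x0 t y) = y := fun y => (hx0 t y ht).symm
    have hFsurj : Function.Surjective F := fun y => ⟨x0 t y, hFx0 y⟩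
    have hx0F : ∀ z, x0 t (F z) = z := by
      intro z
      exact hFmono.injective (hFx0 (F z))
    -- continuity of the inverse map x0 t
    have hcont : Continuous (x0 t) := by
      let e : ℝ ≃o ℝ := StrictMono.orderIsoOfSurjective F hFmono hFsurj
      have : x0 t = e.symm := by
        funext y
        apply hFmono.injective
        have : F (e.symm y) = y := e.apply_symm_apply y
        rw [hFx0, this]
      rw [this]
      exact e.symm.toHomeomorph.continuous
    set a := x0 t x with ha
    set d : ℝ := 1 + deriv w₀ a * t with hd
    have hdpos : 0 < d := by
      have := (hderiv a).le
      have : 0 ≤ deriv w₀ a * t := mul_nonneg this ht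
      linarith
    have hFderiv : HasDerivAt F d a := by
      simpa [hF, hd, Pi.add_def] using
        (hasDerivAt_id a).add
          (((hsmooth.differentiable (by simp) a).hasDerivAt).mul_const t)
    have hinv : HasDerivAt (x0 t) d⁻¹ x := by
      exact HasDerivAt.of_local_left_inverse hcont.continuousAt hFderiv hdpos.ne'
        (Filter.Eventually.of_forall hFx0)
    have hcomp : HasDerivAt (fun y => w₀ (x0 t y)) (deriv w₀ a * d⁻¹) x :=
      HasDerivAt.comp x ((hsmooth.differentiable (by simp) a).hasDerivAt) hinv
    simpa [div_eq_mul_inv] using hcomp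
  · intro t x ht
    have h1 : 0 < deriv w₀ (x0 t x) := hderiv (x0 t x)
    have h2 : 0 < 1 + deriv w₀ (x0 t x) * t := by positivity
    constructor
    · positivity
    · rw [div_le_div_iff₀ h2 ht]
      nlinarith
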